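/- arXiv:2007.12109 — 2 statements merged into one kernel-verified Lean document; each statement's English description precedes it below -/
import Mathlib

section
/- If two words X_1 and X_2 in the alphabet {α_1, α_1^{-1}, ..., α_k, α_k^{-1}} represent the same element of the free group F_k, then the minimum number of unmatched letters over all non-crossing matchings of X_1 (pairing letters with their inverses) equals the corresponding minimum for X_2. -/
open scoped BigOperators

abbrev Letter (k : ℕ) := Fin k × Bool

def Letter.bar {k : ℕ} (x : Letter k) : Letter k := (x.1, !x.2)

/-- `M` is an (incomplete) non-crossing matching of the word `X`,
pairing letters with their inverse letters. -/
def IsNCMatching {k : ℕ} (X : List (Letter k)) (M : Finset (ℕ × ℕ)) : Prop :=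
  (∀ p ∈ M, p.1 < p.2 ∧ p.2 < X.length ∧ X[p.1]? = (X[p.2]?).map Letter.bar) ∧
  (∀ p ∈ M, ∀ q ∈ M, p ≠ q → p.1 ≠ q.1 ∧ p.1 ≠ q.2 ∧ p.2 ≠ q.1 ∧ p.2 ≠ q.2) ∧
  (∀ p ∈ M, ∀ q ∈ M, ¬ (p.1 < q.1 ∧ q.1 < p.2 ∧ p.2 < q.2))

/-- minimal number of unmatched letters over all non-crossing matchings of `X`. -/
noncomputable def ell {k : ℕ} (X : List (Letter k)) : ℕ :=
  sInf {m | ∃ M : Finset (ℕ × ℕ), IsNCMatching X M ∧ m = X.length - 2 * M.card}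

/-- `L_k(n)`: the expected value of `ell` over uniformly random words of length `n`. -/
noncomputable def Lk (k n : ℕ) : ℝ :=
  (∑ w : Fin n → Letter k, (ell (List.ofFn w) : ℝ)) / (2 * k) ^ n

noncomputable def lambda (k : ℕ) : ℝ := ⨅ n : ℕ+, Lk k n / n

theorem test : True := trivial

/-!
Cancelling a pair `a a⁻¹` at positions `n, n + 1` does not change `ell`. Shifting an optimal
matching of the short word past the gap and adding the pair `(n, n + 1)` gives a matching of the
long word with one more pair. Conversely, in a matching of the long word drop the pairs through
`n` and `n + 1`; if these are two different pairs, matching `n` with `i` and `n + 1` with `j`,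
add the pair `{i, j}` instead. Since `n` and `n + 1` are adjacent, every remaining pair contains
`i` iff it contains `n`, iff it contains `n + 1`, iff it contains `j`, so no crossing arises, and
at most one pair is lost. Two words representing the same element of the free group reduce to a
common word.
-/

lemma Letter.bar_bar {k : ℕ} (x : Letter k) : x.bar.bar = x := by
  simp [Letter.bar]

lemma Letter.bar_ne {k : ℕ} (x : Letter k) : x.bar ≠ x := by
  simp [Letter.bar, Prod.ext_iff]

def gapShift (n m i : ℕ) : ℕ := if i < n then i else i + m

def gapUnshift (n m j : ℕ) : ℕ := if j < n then j else j - m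

lemma strictMono_gapShift (n m : ℕ) : StrictMono (gapShift n m) := fun i j h => by
  unfold gapShift; split_ifs <;> omega

lemma gapShift_notMem_Ico (n m i : ℕ) : gapShift n m i ∉ Set.Ico n (n + m) := by
  unfold gapShift; split_ifs <;> simp only [Set.mem_Ico] <;> omega

lemma strictMonoOn_gapUnshift (n m : ℕ) : StrictMonoOn (gapUnshift n m) (Set.Ico n (n + m))ᶜ :=
  fun i hi j hj h => by
    simp only [Set.mem_compl_iff, Set.mem_Ico] at hi hj
    unfold gapUnshift; split_ifs <;> omega

lemma gapShift_gapUnshift {n m j : ℕ} (hj : j ∉ Set.Ico n (n + m)) :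
    gapShift n m (gapUnshift n m j) = j := by
  simp only [Set.mem_Ico] at hj
  unfold gapShift gapUnshift; split_ifs <;> omega

lemma List.getElem?_append_append_gapShift {α : Type*} (L₁ w L₂ : List α) (i : ℕ) :
    (L₁ ++ w ++ L₂)[gapShift L₁.length w.length i]? = (L₁ ++ L₂)[i]? := by
  unfold gapShift
  split_ifs with h
  · rw [List.append_assoc, List.getElem?_append_left h, List.getElem?_append_left h]
  · rw [List.getElem?_append_right (by rw [List.length_append]; omega),
      List.getElem?_append_right (by omega), List.length_append]
    congr 1
    omega

namespace IsNCMatching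

variable {k : ℕ} {X Y : List (Letter k)} {M : Finset (ℕ × ℕ)}

lemma empty (X : List (Letter k)) : IsNCMatching X ∅ := by
  simp [IsNCMatching]

lemma mono {M' : Finset (ℕ × ℕ)} (hM : IsNCMatching X M) (h : M' ⊆ M) : IsNCMatching X M' :=
  ⟨fun p hp => hM.1 p (h hp), fun p hp q hq => hM.2.1 p (h hp) q (h hq),
    fun p hp q hq => hM.2.2 p (h hp) q (h hq)⟩

lemma insert_of_disjoint {r : ℕ × ℕ} (hM : IsNCMatching X M)
    (hr : r.1 < r.2 ∧ r.2 < X.length ∧ X[r.1]? = X[r.2]?.map Letter.bar)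
    (hdisj : ∀ s ∈ M, s.1 ≠ r.1 ∧ s.1 ≠ r.2 ∧ s.2 ≠ r.1 ∧ s.2 ≠ r.2)
    (hnest : ∀ s ∈ M, (r.1 ∈ Set.Ioo s.1 s.2 ↔ r.2 ∈ Set.Ioo s.1 s.2)) :
    IsNCMatching X (insert r M) := by
  obtain ⟨hpair, hdisjM, hcross⟩ := hM
  refine ⟨?_, ?_, ?_⟩
  · exact Finset.forall_mem_insert _ _ _ |>.mpr ⟨hr, hpair⟩
  · simp only [Finset.forall_mem_insert]
    refine ⟨⟨by simp, fun s hs _ => ?_⟩, fun s hs => ⟨fun _ => ?_, hdisjM s hs⟩⟩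
    · have := hdisj s hs; omega
    · have := hdisj s hs; omega
  · simp only [Finset.forall_mem_insert]
    refine ⟨⟨by omega, fun s hs => ?_⟩, fun s hs => ⟨?_, hcross s hs⟩⟩
    all_goals
      have := hdisj s hs; have := hnest s hs; have := (hpair s hs).1
      simp only [Set.mem_Ioo] at *
      omega

lemma image {S : Set ℕ} {g : ℕ → ℕ} (hM : IsNCMatching X M) (hS : ∀ p ∈ M, p.1 ∈ S ∧ p.2 ∈ S)
    (hg : StrictMonoOn g S) (hXY : ∀ i ∈ S, Y[g i]? = X[i]?) :
    IsNCMatching Y (M.image (Prod.map g g)) := by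
  obtain ⟨hpair, hdisj, hcross⟩ := hM
  simp only [IsNCMatching, Finset.forall_mem_image, Prod.map_fst, Prod.map_snd]
  refine ⟨fun p hp => ?_, fun p hp q hq hne => ?_, fun p hp q hq => ?_⟩
  · obtain ⟨hp₁, hp₂⟩ := hS p hp
    obtain ⟨hlt, hlen, hbar⟩ := hpair p hp
    refine ⟨hg hp₁ hp₂ hlt, ?_, by rw [hXY _ hp₁, hXY _ hp₂, hbar]⟩
    by_contra hle
    have hnone := hXY _ hp₂
    rw [List.getElem?_eq_none (not_lt.mp hle), eq_comm, List.getElem?_eq_none_iff] at hnone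
    omega
  · have hinj := hg.injOn
    obtain ⟨hp₁, hp₂⟩ := hS p hp
    obtain ⟨hq₁, hq₂⟩ := hS q hq
    obtain ⟨h₁₁, h₁₂, h₂₁, h₂₂⟩ := hdisj p hp q hq (fun h => hne (h ▸ rfl))
    exact ⟨fun h => h₁₁ (hinj hp₁ hq₁ h), fun h => h₁₂ (hinj hp₁ hq₂ h),
      fun h => h₂₁ (hinj hp₂ hq₁ h), fun h => h₂₂ (hinj hp₂ hq₂ h)⟩
  · obtain ⟨hp₁, hp₂⟩ := hS p hp
    obtain ⟨hq₁, hq₂⟩ := hS q hq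
    rw [hg.lt_iff_lt hp₁ hq₁, hg.lt_iff_lt hq₁ hp₂, hg.lt_iff_lt hp₂ hq₂]
    exact hcross p hp q hq

lemma card_image {S : Set ℕ} {g : ℕ → ℕ} (hS : ∀ p ∈ M, p.1 ∈ S ∧ p.2 ∈ S)
    (hg : StrictMonoOn g S) : (M.image (Prod.map g g)).card = M.card :=
  Finset.card_image_of_injOn fun p hp q hq h =>
    Prod.ext (hg.injOn (hS p hp).1 (hS q hq).1 (congrArg Prod.fst h))
      (hg.injOn (hS p hp).2 (hS q hq).2 (congrArg Prod.snd h))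

lemma mem_Ioo_iff {s p : ℕ × ℕ} (hM : IsNCMatching X M) (hs : s ∈ M) (hp : p ∈ M) (hne : s ≠ p) :
    p.1 ∈ Set.Ioo s.1 s.2 ↔ p.2 ∈ Set.Ioo s.1 s.2 := by
  have := hM.2.1 s hs p hp hne
  have := hM.2.2 s hs p hp
  have := hM.2.2 p hp s hs
  have := (hM.1 s hs).1
  have := (hM.1 p hp).1
  simp only [Set.mem_Ioo]
  omega

lemma exists_partner {p : ℕ × ℕ} {n : ℕ} {a : Letter k} (hM : IsNCMatching X M) (hp : p ∈ M)
    (hpn : p.1 = n ∨ p.2 = n) (ha : X[n]? = some a) :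
    ∃ i, (p = (i, n) ∨ p = (n, i)) ∧ X[i]? = some a.bar := by
  have hbar := (hM.1 p hp).2.2
  rcases hpn with h | h
  · refine ⟨p.2, Or.inr (Prod.ext h rfl), ?_⟩
    rw [h, ha, eq_comm, Option.map_eq_some_iff] at hbar
    obtain ⟨b, hb, rfl⟩ := hbar
    rwa [Letter.bar_bar]
  · exact ⟨p.1, Or.inl (Prod.ext rfl h), by rw [hbar, h, ha, Option.map_some]⟩

lemma disjoint_and_mem_Ioo_iff_of_adjacent {s p q : ℕ × ℕ} {i j n : ℕ} (hM : IsNCMatching X M)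
    (hs : s ∈ M) (hp : p ∈ M) (hq : q ∈ M) (hsp : s ≠ p) (hsq : s ≠ q)
    (hpi : p = (i, n) ∨ p = (n, i)) (hqj : q = (j, n + 1) ∨ q = (n + 1, j)) :
    (s.1 ≠ i ∧ s.1 ≠ j ∧ s.2 ≠ i ∧ s.2 ≠ j ∧ s.1 ≠ n ∧ s.1 ≠ n + 1 ∧ s.2 ≠ n ∧ s.2 ≠ n + 1) ∧
      (i ∈ Set.Ioo s.1 s.2 ↔ j ∈ Set.Ioo s.1 s.2) := by
  have := hM.2.1 s hs p hp hsp
  have := hM.2.1 s hs q hq hsq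
  have := hM.mem_Ioo_iff hs hp hsp
  have := hM.mem_Ioo_iff hs hq hsq
  rcases hpi with rfl | rfl <;> rcases hqj with rfl | rfl <;> simp only [Set.mem_Ioo] at * <;>
    omega

lemma exists_merge {p q : ℕ × ℕ} {n : ℕ} {a : Letter k} (hM : IsNCMatching X M) (hp : p ∈ M)
    (hq : q ∈ M) (hpq : p ≠ q) (hpn : p.1 = n ∨ p.2 = n) (hqn : q.1 = n + 1 ∨ q.2 = n + 1)
    (ha : X[n]? = some a) (hā : X[n + 1]? = some a.bar) :
    ∃ M', IsNCMatching X M' ∧ M.card ≤ M'.card + 1 ∧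
      ∀ s ∈ M', s.1 ≠ n ∧ s.1 ≠ n + 1 ∧ s.2 ≠ n ∧ s.2 ≠ n + 1 := by
  obtain ⟨i, hpi, hi⟩ := hM.exists_partner hp hpn ha
  obtain ⟨j, hqj, hj⟩ := hM.exists_partner hq hqn hā
  rw [Letter.bar_bar] at hj
  have hij : i ≠ j := fun h => a.bar_ne (Option.some_injective _ (hi.symm.trans (h ▸ hj)))
  have hilen := (List.getElem?_eq_some_iff.mp hi).1
  have hjlen := (List.getElem?_eq_some_iff.mp hj).1
  have hijn : i ≠ n ∧ i ≠ n + 1 ∧ j ≠ n ∧ j ≠ n + 1 := by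
    have := hM.2.1 p hp q hq hpq
    have := (hM.1 p hp).1
    have := (hM.1 q hq).1
    rcases hpi with rfl | rfl <;> rcases hqj with rfl | rfl <;> simp only at * <;> omega
  set E := (M.erase p).erase q with hE
  have hEM : ∀ s ∈ E, s ∈ M ∧ s ≠ p ∧ s ≠ q := fun s hs => by
    simp only [hE, Finset.mem_erase] at hs
    exact ⟨hs.2.2, hs.2.1, hs.1⟩
  have hother := fun s hs => have ⟨hsM, hsp, hsq⟩ := hEM s hs
    hM.disjoint_and_mem_Ioo_iff_of_adjacent hsM hp hq hsp hsq hpi hqj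
  have hrX : X[min i j]? = X[max i j]?.map Letter.bar := by
    rcases lt_or_gt_of_ne hij with h | h
    · simp [min_eq_left h.le, max_eq_right h.le, hi, hj]
    · simp [min_eq_right h.le, max_eq_left h.le, hi, hj, Letter.bar_bar]
  refine ⟨insert (min i j, max i j) E, ?_, ?_, ?_⟩
  · refine (hM.mono (fun s hs => (hEM s hs).1)).insert_of_disjoint ⟨by omega, by omega, hrX⟩
      (fun s hs => ?_) (fun s hs => ?_)
    · have := (hother s hs).1; omega
    · have := hother s hs
      simp only [Set.mem_Ioo] at this ⊢; omega
  · have hrE : (min i j, max i j) ∉ E := fun hr => by have := (hother _ hr).1; omega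
    have hpcard := Finset.card_erase_add_one hp
    have hqcard : E.card + 1 = (M.erase p).card :=
      Finset.card_erase_add_one (Finset.mem_erase.mpr ⟨hpq.symm, hq⟩)
    rw [Finset.card_insert_of_notMem hrE]
    omega
  · simp only [Finset.forall_mem_insert]
    exact ⟨by omega, fun s hs => by have := (hother s hs).1; omega⟩

lemma exists_avoiding {n : ℕ} {a : Letter k} (hM : IsNCMatching X M) (ha : X[n]? = some a)
    (hā : X[n + 1]? = some a.bar) :
    ∃ M', IsNCMatching X M' ∧ M.card ≤ M'.card + 1 ∧
      ∀ s ∈ M', s.1 ≠ n ∧ s.1 ≠ n + 1 ∧ s.2 ≠ n ∧ s.2 ≠ n + 1 := by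
  by_cases hmerge : ∃ p ∈ M, ∃ q ∈ M, p ≠ q ∧ (p.1 = n ∨ p.2 = n) ∧ (q.1 = n + 1 ∨ q.2 = n + 1)
  · obtain ⟨p, hp, q, hq, hpq, hpn, hqn⟩ := hmerge
    exact hM.exists_merge hp hq hpq hpn hqn ha hā
  let avoids (s : ℕ × ℕ) : Prop := s.1 ≠ n ∧ s.1 ≠ n + 1 ∧ s.2 ≠ n ∧ s.2 ≠ n + 1
  refine ⟨M.filter avoids, hM.mono (Finset.filter_subset _ _), ?_,
    fun s hs => (Finset.mem_filter.mp hs).2⟩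
  -- two pairs touching `{n, n + 1}` would have to be mergeable
  have htouch : (M.filter (¬ avoids ·)).card ≤ 1 := Finset.card_le_one.mpr fun p hp q hq => by
    by_contra hpq
    simp only [Finset.mem_filter, avoids] at hp hq
    have := hM.2.1 p hp.1 q hq.1 hpq
    have hp' : (p.1 = n ∨ p.2 = n) ∨ (p.1 = n + 1 ∨ p.2 = n + 1) := by omega
    have hq' : (q.1 = n ∨ q.2 = n) ∨ (q.1 = n + 1 ∨ q.2 = n + 1) := by omega
    rcases hp' with hpn | hpn <;> rcases hq' with hqn | hqn
    · omega
    · exact hmerge ⟨p, hp.1, q, hq.1, hpq, hpn, hqn⟩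
    · exact hmerge ⟨q, hq.1, p, hp.1, Ne.symm hpq, hqn, hpn⟩
    · omega
  have := Finset.card_filter_add_card_filter_not (s := M) avoids
  omega

end IsNCMatching

section ell

variable {k : ℕ}

lemma ell_le {X : List (Letter k)} {M : Finset (ℕ × ℕ)} (hM : IsNCMatching X M) :
    ell X ≤ X.length - 2 * M.card :=
  Nat.sInf_le ⟨M, hM, rfl⟩

lemma exists_isNCMatching_ell_eq (X : List (Letter k)) :
    ∃ M, IsNCMatching X M ∧ ell X = X.length - 2 * M.card := by
  have hne : {m | ∃ M, IsNCMatching X M ∧ m = X.length - 2 * M.card}.Nonempty :=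
    ⟨_, ∅, IsNCMatching.empty X, rfl⟩
  exact Nat.sInf_mem hne

lemma ell_insert_cancel_le (L₁ L₂ : List (Letter k)) (a : Letter k) :
    ell (L₁ ++ a :: a.bar :: L₂) ≤ ell (L₁ ++ L₂) := by
  obtain ⟨M, hM, hell⟩ := exists_isNCMatching_ell_eq (L₁ ++ L₂)
  have hword : L₁ ++ a :: a.bar :: L₂ = L₁ ++ [a, a.bar] ++ L₂ := by simp
  set n := L₁.length
  have hS : ∀ p ∈ M, p.1 ∈ Set.univ ∧ p.2 ∈ Set.univ := fun _ _ => ⟨trivial, trivial⟩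
  have hshift := hM.image hS ((strictMono_gapShift n 2).strictMonoOn _)
    fun i _ => List.getElem?_append_append_gapShift L₁ [a, a.bar] L₂ i
  have hgap : ∀ s ∈ M.image (Prod.map (gapShift n 2) (gapShift n 2)),
      s.1 ≠ n ∧ s.1 ≠ n + 1 ∧ s.2 ≠ n ∧ s.2 ≠ n + 1 := by
    simp only [Finset.forall_mem_image]
    intro p _
    have := gapShift_notMem_Ico n 2 p.1
    have := gapShift_notMem_Ico n 2 p.2
    simp only [Prod.map_fst, Prod.map_snd, Set.mem_Ico] at *
    omega
  have hins := hshift.insert_of_disjoint (r := (n, n + 1))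
    ⟨by omega, by simp [n], by simp [n, Letter.bar]⟩
    (fun s hs => by have := hgap s hs; omega)
    (fun s hs => by have := hgap s hs; simp only [Set.mem_Ioo]; omega)
  have hcard := Finset.card_insert_of_notMem fun h => (hgap (n, n + 1) h).1 rfl
  rw [IsNCMatching.card_image hS ((strictMono_gapShift n 2).strictMonoOn _)] at hcard
  have := ell_le hins
  simp only [hword, hcard, List.length_append, List.length_cons, List.length_nil] at this hell ⊢
  omega

lemma ell_le_insert_cancel (L₁ L₂ : List (Letter k)) (a : Letter k) :
    ell (L₁ ++ L₂) ≤ ell (L₁ ++ a :: a.bar :: L₂) := by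
  have hword : L₁ ++ a :: a.bar :: L₂ = L₁ ++ [a, a.bar] ++ L₂ := by simp
  rw [hword]
  obtain ⟨M, hM, hell⟩ := exists_isNCMatching_ell_eq (L₁ ++ [a, a.bar] ++ L₂)
  set n := L₁.length
  obtain ⟨M', hM', hcard, havoid⟩ :=
    hM.exists_avoiding (n := n) (a := a) (by simp [n]) (by simp [n, Letter.bar])
  have hS : ∀ p ∈ M', p.1 ∈ (Set.Ico n (n + 2))ᶜ ∧ p.2 ∈ (Set.Ico n (n + 2))ᶜ := by
    intro p hp
    have := havoid p hp
    simp only [Set.mem_compl_iff, Set.mem_Ico]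
    omega
  have hunshift := hM'.image hS (strictMonoOn_gapUnshift n 2) fun j hj => by
    have := List.getElem?_append_append_gapShift L₁ [a, a.bar] L₂ (gapUnshift n 2 j)
    change (L₁ ++ [a, a.bar] ++ L₂)[gapShift n 2 (gapUnshift n 2 j)]? = _ at this
    rwa [gapShift_gapUnshift hj, eq_comm] at this
  have := ell_le hunshift
  rw [IsNCMatching.card_image hS (strictMonoOn_gapUnshift n 2)] at this
  simp only [List.length_append, List.length_cons, List.length_nil] at this hell
  omega

lemma ell_insert_cancel (L₁ L₂ : List (Letter k)) (a : Letter k) :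
    ell (L₁ ++ a :: a.bar :: L₂) = ell (L₁ ++ L₂) :=
  le_antisymm (ell_insert_cancel_le L₁ L₂ a) (ell_le_insert_cancel L₁ L₂ a)

lemma ell_eq_of_red {X Y : List (Letter k)} (h : FreeGroup.Red X Y) : ell X = ell Y := by
  induction h with
  | refl => rfl
  | tail _ hstep ih =>
    obtain ⟨⟩ := hstep
    exact ih.trans (ell_insert_cancel _ _ _)

end ell

/-- If two words over the alphabet of generators and their inverses represent the same
element of the free group, then the minimal number of unmatched letters over all
non-crossing matchings is the same for both words. -/
theorem ell_well_defined {k : ℕ} (X₁ X₂ : List (Letter k))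
    (h : FreeGroup.mk X₁ = FreeGroup.mk X₂) : ell X₁ = ell X₂ := by
  obtain ⟨Y, h₁, h₂⟩ := FreeGroup.Red.exact.mp h
  exact (ell_eq_of_red h₁).trans (ell_eq_of_red h₂).symm
end

section
/- Fix k ≥ 2 and positive integers a_1,...,a_r with 1 ≤ r ≤ k. The number of words w over the 2k-letter alphabet such that (i) for each symbol x at most one of x, x̄ occurs in w, (ii) w uses exactly r distinct symbols, and (iii) a_1(w)=a_1, ..., a_r(w)=a_r, equals 2^r · k(k-1)···(k-r+1) · 2^{a_2 - 1} · 3^{a_3 - 1} ··· r^{a_r - 1}. -/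
/-- `a_1(w)+⋯+a_j(w)`: the length of the maximal initial segment of `w` containing at
most `j` distinct symbols. -/
def aSum {k : ℕ} (j : ℕ) (w : List (Letter k)) : ℕ :=
  Nat.findGreatest (fun m => (w.take m).toFinset.card ≤ j) w.length

/-- The statistic `a_j(w)` of a word. -/
def aStat {k : ℕ} (j : ℕ) (w : List (Letter k)) : ℕ := aSum j w - aSum (j - 1) w

namespace WordProfile

variable {k : ℕ}

section aSum

variable {j : ℕ} {w : List (Letter k)}

theorem card_toFinset_take_mono {m n : ℕ} (h : m ≤ n) :
    (w.take m).toFinset.card ≤ (w.take n).toFinset.card :=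
  Finset.card_le_card fun x hx => by
    simp only [List.mem_toFinset] at hx ⊢
    exact (List.take_prefix_take_left h).subset hx

theorem toFinset_take_succ {n : ℕ} (hn : n < w.length) :
    (w.take (n + 1)).toFinset = insert w[n] (w.take n).toFinset := by
  rw [List.take_add_one, List.getElem?_eq_getElem hn, Option.toList_some, List.toFinset_append,
    Finset.union_comm]
  rfl

theorem aSum_le_length : aSum j w ≤ w.length :=
  Nat.findGreatest_le _

theorem card_toFinset_take_aSum_le : (w.take (aSum j w)).toFinset.card ≤ j :=
  Nat.findGreatest_spec (P := fun m => (w.take m).toFinset.card ≤ j) (Nat.zero_le _) (by simp)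

theorem lt_card_toFinset_take_aSum_succ (h : aSum j w < w.length) :
    j < (w.take (aSum j w + 1)).toFinset.card :=
  Nat.lt_of_not_le (Nat.findGreatest_is_greatest (P := fun m => (w.take m).toFinset.card ≤ j)
    (Nat.lt_succ_self _) h)

theorem aSum_eq_of_le {m : ℕ} (hm : m ≤ w.length) (hle : (w.take m).toFinset.card ≤ j)
    (hmax : m = w.length ∨ j < (w.take (m + 1)).toFinset.card) :
    aSum j w = m := by
  refine (Nat.findGreatest_eq_iff.2 ⟨hm, fun _ => hle, fun n hmn hn hle' => ?_⟩)
  rcases hmax with rfl | hmax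
  · omega
  · exact absurd (hle'.trans' (card_toFinset_take_mono hmn)) hmax.not_ge

theorem aSum_eq_length (h : w.toFinset.card ≤ j) : aSum j w = w.length :=
  aSum_eq_of_le le_rfl (by simpa using h) (Or.inl rfl)

theorem aSum_lt_length (h : j < w.toFinset.card) : aSum j w < w.length := by
  refine aSum_le_length.lt_of_ne fun heq => ?_
  have := card_toFinset_take_aSum_le (j := j) (w := w)
  rw [heq, List.take_length] at this
  omega

theorem aSum_zero : aSum 0 w = 0 := by
  rcases w with _ | ⟨x, w⟩
  · rfl
  · exact aSum_eq_of_le (Nat.zero_le _) (by simp) (Or.inr (by simp))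

theorem aSum_mono {j' : ℕ} (h : j ≤ j') : aSum j w ≤ aSum j' w :=
  Nat.findGreatest_mono (fun _ hn => hn.trans h) le_rfl

theorem getElem_aSum_notMem_take (h : aSum j w < w.length) :
    w[aSum j w] ∉ w.take (aSum j w) := by
  intro hmem
  have := lt_card_toFinset_take_aSum_succ h
  rw [toFinset_take_succ h, Finset.insert_eq_of_mem (List.mem_toFinset.2 hmem)] at this
  exact this.not_ge card_toFinset_take_aSum_le

theorem card_toFinset_take_aSum (h : j < w.toFinset.card) :
    (w.take (aSum j w)).toFinset.card = j := by
  have hlt := aSum_lt_length h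
  have := lt_card_toFinset_take_aSum_succ hlt
  rw [toFinset_take_succ hlt, Finset.card_insert_of_notMem
    (mt List.mem_toFinset.1 (getElem_aSum_notMem_take hlt))] at this
  exact le_antisymm card_toFinset_take_aSum_le (Nat.lt_succ_iff.1 this)

theorem aSum_append_cons {u t : List (Letter k)} {ℓ : Letter k} (hℓ : ℓ ∉ u)
    (hj : j ≤ u.toFinset.card) : aSum j (u ++ ℓ :: t) = aSum j u := by
  have hle : aSum j u ≤ u.length := aSum_le_length
  have htake : ∀ m ≤ u.length, (u ++ ℓ :: t).take m = u.take m := fun m hm =>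
    List.take_append_of_le_length hm
  refine aSum_eq_of_le (by rw [List.length_append]; omega)
    (by rw [htake _ hle]; exact card_toFinset_take_aSum_le) (Or.inr ?_)
  rcases hle.lt_or_eq with hlt | heq
  · rw [htake _ hlt]
    exact lt_card_toFinset_take_aSum_succ hlt
  · rw [heq, List.take_length_add_append, List.take_one, List.head?_cons]
    simp only [Option.toList_some, List.toFinset_append, List.toFinset_cons,
      List.toFinset_nil, insert_empty_eq, Finset.union_singleton]
    rw [Finset.card_insert_of_notMem (mt List.mem_toFinset.1 hℓ)]
    omega

theorem aStat_eq_iff_aSum_eq {r : ℕ} {a : ℕ → ℕ} :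
    (∀ j, 1 ≤ j → j ≤ r → aStat j w = a j) ↔
      ∀ j ≤ r, aSum j w = ∑ i ∈ Finset.range j, a (i + 1) := by
  constructor
  · intro h j hj
    induction j with
    | zero => simp [aSum_zero]
    | succ j ih =>
      have hstat := h (j + 1) (by omega) hj
      rw [aStat, Nat.add_sub_cancel] at hstat
      have := aSum_mono (w := w) (Nat.le_add_right j 1)
      rw [Finset.sum_range_succ, ← ih (by omega)]
      omega
  · intro h j hj1 hjr
    obtain ⟨i, rfl⟩ : ∃ i, j = i + 1 := ⟨j - 1, by omega⟩
    rw [aStat, h _ hjr, h _ (by omega), Finset.sum_range_succ, Nat.add_sub_cancel,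
      Nat.add_sub_cancel_left]

end aSum

theorem forall_not_and_mem_iff_injOn_fst (w : List (Letter k)) :
    (∀ i : Fin k, ¬ ((i, true) ∈ w ∧ (i, false) ∈ w)) ↔
      Set.InjOn Prod.fst (w.toFinset : Set (Letter k)) := by
  constructor
  · rintro h ⟨i, b⟩ hx ⟨i', b'⟩ hy (rfl : i = i')
    simp only [Finset.mem_coe, List.mem_toFinset] at hx hy
    cases b <;> cases b' <;> first | rfl | exact absurd ⟨‹_›, ‹_›⟩ (h i)
  · rintro h i ⟨ht, hf⟩
    simpa using h (Finset.mem_coe.2 (List.mem_toFinset.2 ht))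
      (Finset.mem_coe.2 (List.mem_toFinset.2 hf)) rfl

def HasProfile (r : ℕ) (a : ℕ → ℕ) (w : List (Letter k)) : Prop :=
  (∀ i : Fin k, ¬ ((i, true) ∈ w ∧ (i, false) ∈ w)) ∧ w.toFinset.card = r ∧
    ∀ j, 1 ≤ j → j ≤ r → aStat j w = a j

section HasProfile

variable {r : ℕ} {a : ℕ → ℕ}

theorem hasProfile_zero_iff {w : List (Letter k)} : HasProfile 0 a w ↔ w = [] := by
  refine ⟨fun h => by simpa using h.2.1, ?_⟩
  rintro rfl
  exact ⟨by simp, rfl, fun j hj1 hj0 => by omega⟩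

theorem length_eq_sum_of_hasProfile {w : List (Letter k)} (h : HasProfile r a w) :
    w.length = ∑ i ∈ Finset.range r, a (i + 1) := by
  rw [← aSum_eq_length h.2.1.le, aStat_eq_iff_aSum_eq.1 h.2.2 r le_rfl]

theorem finite_hasProfile (r : ℕ) (a : ℕ → ℕ) :
    Finite {w : List (Letter k) // HasProfile r a w} :=
  ((List.finite_length_eq (Letter k) _).subset fun _ => length_eq_sum_of_hasProfile).to_subtype

theorem hasProfile_append_cons {u t : List (Letter k)} {ℓ : Letter k} (hu : HasProfile r a u)
    (hℓ : ℓ.1 ∉ u.toFinset.image Prod.fst) (ht : ∀ x ∈ t, x ∈ insert ℓ u.toFinset)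
    (hlen : t.length + 1 = a (r + 1)) :
    HasProfile (r + 1) a (u ++ ℓ :: t) := by
  obtain ⟨hpair, hcard, hprof⟩ := hu
  rw [aStat_eq_iff_aSum_eq] at hprof
  have hℓu : ℓ ∉ u := fun h => hℓ (Finset.mem_image_of_mem _ (List.mem_toFinset.2 h))
  have hset : (u ++ ℓ :: t).toFinset = insert ℓ u.toFinset := by
    refine le_antisymm (fun x hx => ?_) (Finset.insert_subset (by simp) fun x hx => by simp_all)
    simp only [List.toFinset_append, List.toFinset_cons, Finset.mem_union, Finset.mem_insert,
      List.mem_toFinset] at hx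
    rcases hx with hx | hx | hx
    exacts [Finset.mem_insert_of_mem (List.mem_toFinset.2 hx), hx ▸ Finset.mem_insert_self _ _,
      ht x hx]
  have hcard' : (u ++ ℓ :: t).toFinset.card = r + 1 := by
    rw [hset, Finset.card_insert_of_notMem (mt List.mem_toFinset.1 hℓu), hcard]
  refine ⟨?_, hcard', aStat_eq_iff_aSum_eq.2 fun j hj => ?_⟩
  · rw [forall_not_and_mem_iff_injOn_fst, hset, Finset.coe_insert,
      Set.injOn_insert (by simpa using hℓu)]
    exact ⟨(forall_not_and_mem_iff_injOn_fst u).1 hpair, by simpa using hℓ⟩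
  · rcases hj.lt_or_eq with hj | rfl
    · rw [aSum_append_cons hℓu (by omega), hprof j (by omega)]
    · rw [aSum_eq_length hcard'.le, Finset.sum_range_succ, ← hprof r le_rfl,
        aSum_eq_length hcard.le]
      simp only [List.length_append, List.length_cons]
      omega

theorem exists_eq_append_cons_of_hasProfile_succ {w : List (Letter k)}
    (hw : HasProfile (r + 1) a w) :
    ∃ u ℓ t, HasProfile r a u ∧ ℓ.1 ∉ u.toFinset.image Prod.fst ∧
      (∀ x ∈ t, x ∈ insert ℓ u.toFinset) ∧ t.length + 1 = a (r + 1) ∧ w = u ++ ℓ :: t := by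
  obtain ⟨hpair, hcard, hprof⟩ := hw
  rw [aStat_eq_iff_aSum_eq] at hprof
  have hr : r < w.toFinset.card := by omega
  have hlt := aSum_lt_length hr
  have hsplit : w = w.take (aSum r w) ++ w[aSum r w] :: w.drop (aSum r w + 1) := by
    rw [← List.drop_eq_getElem_cons hlt, List.take_append_drop]
  have hℓu := getElem_aSum_notMem_take hlt
  have hucard := card_toFinset_take_aSum hr
  set n := aSum r w
  set u := w.take n
  set ℓ := w[n]
  set t := w.drop (n + 1)
  have hset : w.toFinset = insert ℓ u.toFinset := by
    refine (Finset.eq_of_subset_of_card_le ?_ ?_).symm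
    · rw [← toFinset_take_succ hlt]
      intro x hx
      rw [List.mem_toFinset] at hx ⊢
      exact List.take_subset _ _ hx
    · rw [hcard, Finset.card_insert_of_notMem (mt List.mem_toFinset.1 hℓu), hucard]
  have hinj := (forall_not_and_mem_iff_injOn_fst w).1 hpair
  rw [hset, Finset.coe_insert, Set.injOn_insert (by simpa using hℓu)] at hinj
  have hstable (j : ℕ) (hj : j ≤ r) : aSum j u = aSum j w := by
    rw [hsplit, aSum_append_cons hℓu (hucard ▸ hj)]
  refine ⟨u, ℓ, t, ⟨(forall_not_and_mem_iff_injOn_fst u).2 hinj.1, hucard,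
    aStat_eq_iff_aSum_eq.2 fun j hj => ?_⟩, by simpa using hinj.2,
    fun x hx => hset ▸ List.mem_toFinset.2 (List.mem_of_mem_drop hx), ?_, hsplit⟩
  · rw [hstable j hj, hprof j (by omega)]
  · have hulen : u.length = n := List.length_take_of_le aSum_le_length
    have hwlen : w.length = n + a (r + 1) := by
      rw [← aSum_eq_length hcard.le, hprof _ le_rfl, Finset.sum_range_succ, ← hprof r (by omega)]
    have := congrArg List.length hsplit
    simp only [List.length_append, List.length_cons] at this
    omega

end HasProfile

/-- For `m + 1 = a_{r+1}` and `u` with profile `(a_1, …, a_r)`, the fibre over `u` of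
`w ↦ w.take (a_1 + ⋯ + a_r)` on words with profile `(a_1, …, a_{r+1})`. -/
abbrev Extension (u : List (Letter k)) (m : ℕ) : Type :=
  Σ ℓ : {ℓ : Letter k // ℓ.1 ∉ u.toFinset.image Prod.fst}, Fin m → ↥(insert ℓ.1 u.toFinset)

def Extension.word {u : List (Letter k)} {m : ℕ} (e : Extension u m) : List (Letter k) :=
  u ++ e.1.1 :: List.ofFn fun i => (e.2 i).1

theorem card_subtype_fst_notMem (s : Finset (Fin k)) :
    Nat.card {ℓ : Letter k // ℓ.1 ∉ s} = 2 * (k - s.card) := by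
  rw [Nat.card_congr (Equiv.prodSubtypeFstEquivSubtypeProd (p := (· ∉ s))), Nat.card_prod,
    mul_comm]
  simp [Fintype.card_subtype_compl]

theorem card_extension {u : List (Letter k)}
    (hu : Set.InjOn Prod.fst (u.toFinset : Set (Letter k))) (m : ℕ) :
    Nat.card (Extension u m) = 2 * (k - u.toFinset.card) * (u.toFinset.card + 1) ^ m := by
  have htail (ℓ : {ℓ : Letter k // ℓ.1 ∉ u.toFinset.image Prod.fst}) :
      Nat.card (Fin m → ↥(insert ℓ.1 u.toFinset)) = (u.toFinset.card + 1) ^ m := by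
    rw [Nat.card_fun, Nat.card_eq_fintype_card, Fintype.card_coe,
      Finset.card_insert_of_notMem fun h => ℓ.2 (Finset.mem_image_of_mem _ h), Nat.card_fin]
  rw [Nat.card_sigma, Finset.sum_congr rfl fun ℓ _ => htail ℓ, Finset.sum_const, Finset.card_univ,
    ← Nat.card_eq_fintype_card, card_subtype_fst_notMem, Finset.card_image_of_injOn hu,
    smul_eq_mul]

section Count

variable {r : ℕ} {a : ℕ → ℕ}

theorem sigma_word_injective {m : ℕ} :
    Function.Injective fun e : Σ u : {u : List (Letter k) // HasProfile r a u}, Extension u.1 m =>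
      e.2.word := by
  rintro ⟨⟨u, hu⟩, ⟨ℓ, hℓ⟩, f⟩ ⟨⟨u', hu'⟩, ⟨ℓ', hℓ'⟩, f'⟩ h
  obtain ⟨rfl, htail⟩ := List.append_inj h
    ((length_eq_sum_of_hasProfile hu).trans (length_eq_sum_of_hasProfile hu').symm)
  obtain ⟨rfl, hf⟩ := List.cons_eq_cons.1 htail
  obtain rfl : f = f' := funext fun i => Subtype.ext (congrFun (List.ofFn_inj.1 hf) i)
  rfl

theorem range_sigma_word {m : ℕ} (hm : m + 1 = a (r + 1)) :
    Set.range (fun e : Σ u : {u : List (Letter k) // HasProfile r a u}, Extension u.1 m =>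
      e.2.word) = {w | HasProfile (r + 1) a w} := by
  ext w
  constructor
  · rintro ⟨⟨⟨u, hu⟩, ⟨ℓ, hℓ⟩, f⟩, rfl⟩
    refine hasProfile_append_cons hu hℓ ?_ (by simpa using hm)
    simp only [List.mem_ofFn]
    rintro _ ⟨i, rfl⟩
    exact (f i).2
  · intro hw
    obtain ⟨u, ℓ, t, hu, hℓ, ht, hlen, rfl⟩ := exists_eq_append_cons_of_hasProfile_succ hw
    have hi (i : Fin m) : i.1 < t.length := by omega
    refine ⟨⟨⟨u, hu⟩, ⟨ℓ, hℓ⟩, fun i => ⟨t[i.1]'(hi i), ht _ (List.getElem_mem _)⟩⟩, ?_⟩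
    simp only [Extension.word, List.append_cancel_left_eq, List.cons.injEq, true_and]
    exact List.ext_getElem (by simp; omega) fun _ _ _ => by simp

theorem card_hasProfile_succ {m : ℕ} (hm : m + 1 = a (r + 1)) :
    Nat.card {w : List (Letter k) // HasProfile (r + 1) a w} =
      Nat.card {u : List (Letter k) // HasProfile r a u} * (2 * (k - r) * (r + 1) ^ m) := by
  have := finite_hasProfile (k := k) r a
  have := Fintype.ofFinite {u : List (Letter k) // HasProfile r a u}
  calc Nat.card {w : List (Letter k) // HasProfile (r + 1) a w}
      = Nat.card (Σ u : {u : List (Letter k) // HasProfile r a u}, Extension u.1 m) := by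
        rw [← Nat.card_range_of_injective sigma_word_injective, range_sigma_word hm]
        rfl
    _ = ∑ u : {u : List (Letter k) // HasProfile r a u}, 2 * (k - r) * (r + 1) ^ m := by
        rw [Nat.card_sigma]
        refine Finset.sum_congr rfl fun u _ => ?_
        rw [card_extension ((forall_not_and_mem_iff_injOn_fst _).1 u.2.1), u.2.2.1]
    _ = _ := by rw [Finset.sum_const, Finset.card_univ, smul_eq_mul, Nat.card_eq_fintype_card]

theorem card_hasProfile (ha : ∀ j, 1 ≤ j → j ≤ r → 1 ≤ a j) :
    Nat.card {w : List (Letter k) // HasProfile r a w} =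
      ∏ j ∈ Finset.range r, 2 * (k - j) * (j + 1) ^ (a (j + 1) - 1) := by
  induction r with
  | zero =>
    simp only [hasProfile_zero_iff, Finset.range_zero, Finset.prod_empty]
    exact Nat.card_unique
  | succ r ih =>
    have := ha (r + 1) le_add_self le_rfl
    rw [card_hasProfile_succ (m := a (r + 1) - 1) (by omega),
      ih fun j hj1 hjr => ha j hj1 (by omega), Finset.prod_range_succ]

end Count

theorem prod_range_eq_pow_mul_descFactorial_mul (k r : ℕ) (e : ℕ → ℕ) :
    ∏ j ∈ Finset.range r, 2 * (k - j) * (j + 1) ^ e (j + 1) =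
      2 ^ r * k.descFactorial r * ∏ j ∈ Finset.Icc 2 r, j ^ e j := by
  rw [Finset.prod_mul_distrib, Finset.prod_mul_distrib, Finset.prod_const, Finset.card_range,
    Nat.descFactorial_eq_prod_range, Finset.range_eq_Ico, Finset.prod_Ico_add' (fun j => j ^ e j),
    zero_add, Finset.Ico_add_one_right_eq_Icc]
  congr 1
  refine (Finset.prod_subset (Finset.Icc_subset_Icc_left one_le_two) fun j hj hj2 => ?_).symm
  obtain rfl : j = 1 := by simp only [Finset.mem_Icc] at hj hj2; omega
  exact one_pow _

end WordProfile

theorem count_words_with_profile_general (k r : ℕ)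
    (a : ℕ → ℕ) (ha : ∀ j, 1 ≤ j → j ≤ r → 1 ≤ a j) :
    Nat.card {w : List (Letter k) //
        (∀ i : Fin k, ¬ ((i, true) ∈ w ∧ (i, false) ∈ w)) ∧
        w.toFinset.card = r ∧
        (∀ j, 1 ≤ j → j ≤ r → aStat j w = a j)} =
      2 ^ r * Nat.descFactorial k r * ∏ j ∈ Finset.Icc 2 r, j ^ (a j - 1) :=
  (WordProfile.card_hasProfile ha).trans
    (WordProfile.prod_range_eq_pow_mul_descFactorial_mul k r fun j => a j - 1)

/-- The number of words `w` over the `2k`-letter alphabet such that at most one of each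
pair `x, x̄` occurs in `w`, `w` uses exactly `r` distinct symbols, and `a_j(w) = a_j` for
`1 ≤ j ≤ r`, equals `2^r · k(k-1)⋯(k-r+1) · 2^{a_2-1} 3^{a_3-1} ⋯ r^{a_r-1}`. -/
theorem count_words_with_profile (k r : ℕ) (hk : 2 ≤ k) (hr1 : 1 ≤ r) (hrk : r ≤ k)
    (a : ℕ → ℕ) (ha : ∀ j, 1 ≤ j → j ≤ r → 1 ≤ a j) :
    Nat.card {w : List (Letter k) //
        (∀ i : Fin k, ¬ ((i, true) ∈ w ∧ (i, false) ∈ w)) ∧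
        w.toFinset.card = r ∧
        (∀ j, 1 ≤ j → j ≤ r → aStat j w = a j)} =
      2 ^ r * Nat.descFactorial k r * ∏ j ∈ Finset.Icc 2 r, j ^ (a j - 1) :=
  count_words_with_profile_general k r a ha
end
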